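/- For every nonempty family F of increasing functions [0,∞] → [0,∞] that is closed under pointwise addition and under composition, there exists a nonempty family G of ICOD functions, closed under pointwise addition and under composition, such that the operator-norm closure of ⋃_{g∈G} B_g equals the operator-norm closure of ⋃_{f∈F} B_f. -/

import Mathlib

open MeasureTheory ENNReal Filter

noncomputable section

/-- The Hilbert space `L²(ℝ)` with Lebesgue measure. -/
abbrev L2R : Type := MeasureTheory.Lp ℂ 2 (MeasureTheory.volume : MeasureTheory.Measure ℝ)

/-- The Lebesgue measure of the support of (a representative of) `ξ ∈ L²(ℝ)`. -/
def musupp (ξ : L2R) : ℝ≥0∞ := MeasureTheory.volume (Function.support (ξ : ℝ → ℂ))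

/-- The support expansion function `Φ_a` of a bounded operator `a` on `L²(ℝ)`:
`Φ_a(x) = sup { μ(supp(aξ)) : μ(supp ξ) ≤ x }`. -/
def Phi (a : L2R →L[ℂ] L2R) (x : ℝ≥0∞) : ℝ≥0∞ :=
  ⨆ ξ : {ξ : L2R // musupp ξ ≤ x}, musupp (a ξ.1)

/-- The set `B_f` of operators controlled by `f`: both `Φ_a ≤ f` and `Φ_{a*} ≤ f`. -/
def Bset (f : ℝ≥0∞ → ℝ≥0∞) : Set (L2R →L[ℂ] L2R) :=
  {a | (∀ x, Phi a x ≤ f x) ∧ (∀ x, Phi (ContinuousLinearMap.adjoint a) x ≤ f x)}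

/-- `f : [0,∞] → [0,∞]` is ICOD: increasing, concave down, `f 0 = 0`, `f ∞ = sup_{t<∞} f t`. -/
def ICOD (f : ℝ≥0∞ → ℝ≥0∞) : Prop :=
  Monotone f ∧
  (∀ a b x y : ℝ≥0∞, a + b = 1 → a * f x + b * f y ≤ f (a * x + b * y)) ∧
  f 0 = 0 ∧
  f ⊤ = ⨆ t ∈ Set.Iio (⊤ : ℝ≥0∞), f t

/-!
Take `G` to be the ICOD functions dominated by a member of `F`; it inherits the closure properties
of `F`, and `⋃_{g ∈ G} B_g ⊆ ⋃_{f ∈ F} B_f`. Conversely, for `a ∈ B_f` the function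
`h = Φ_a + Φ_{a*}` is increasing, vanishes at `0`, is subadditive (a vector whose support has
measure `x + y` splits into pieces with supports of measure `x` and `y`, since Lebesgue measure
takes every intermediate value) and satisfies `h ∞ = sup_{t < ∞} h t` (support measure is lower
semicontinuous on `L²(ℝ)` and vectors of finite support measure are dense). Subadditivity gives
`h x ≤ (x / t + 1) h t`, so the infimum of these affine functions, corrected at `0` and `∞`, is an
ICOD majorant of `h` bounded by `2 h ≤ 4 f`. The two unions are therefore already equal.
-/

open Set Function Topology ContinuousLinearMap

lemma measure_support_le_of_tendsto_ae {α E : Type*} [MeasurableSpace α] {μ : Measure α}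
    [TopologicalSpace E] [Zero E] [T1Space E] {f : ℕ → α → E} {g : α → E} {c : ℝ≥0∞}
    (hfg : ∀ᵐ x ∂μ, Tendsto (fun n => f n x) atTop (𝓝 (g x)))
    (hf : ∀ n, μ (support (f n)) ≤ c) : μ (support g) ≤ c := by
  have hsupp : support g ≤ᵐ[μ] ⋃ N, ⋂ n ≥ N, support (f n) := by
    filter_upwards [hfg] with x hx hgx
    obtain ⟨N, hN⟩ := eventually_atTop.1 (hx.eventually_ne hgx)
    exact mem_iUnion.2 ⟨N, mem_iInter₂.2 hN⟩
  have hmono : Monotone fun N => ⋂ n ≥ N, support (f n) :=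
    fun N N' hNN' => biInter_subset_biInter_left fun n hn => le_trans hNN' hn
  calc μ (support g) ≤ μ (⋃ N, ⋂ n ≥ N, support (f n)) := measure_mono_ae hsupp
    _ = ⨆ N, μ (⋂ n ≥ N, support (f n)) := hmono.measure_iUnion
    _ ≤ c := iSup_le fun N => (measure_mono (biInter_subset_of_mem le_rfl)).trans (hf N)

lemma Real.volume_inter_Icc_le (E : Set ℝ) (r r' : ℝ) :
    volume (E ∩ Icc (-r') r') ≤ volume (E ∩ Icc (-r) r) + 2 * ENNReal.ofReal |r' - r| := by
  have hsub : E ∩ Icc (-r') r' ⊆ (E ∩ Icc (-r) r) ∪ (Ico (-r') (-r) ∪ Ioc r r') := by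
    rintro z ⟨hzE, hz₁, hz₂⟩
    by_cases h₁ : -r ≤ z
    · by_cases h₂ : z ≤ r
      · exact Or.inl ⟨hzE, h₁, h₂⟩
      · exact Or.inr (Or.inr ⟨not_le.1 h₂, hz₂⟩)
    · exact Or.inr (Or.inl ⟨hz₁, not_le.1 h₁⟩)
  calc volume (E ∩ Icc (-r') r')
      ≤ volume (E ∩ Icc (-r) r) + (volume (Ico (-r') (-r)) + volume (Ioc r r')) :=
        (measure_mono hsub).trans <| (measure_union_le _ _).trans <| by
          gcongr; exact measure_union_le _ _
    _ ≤ volume (E ∩ Icc (-r) r) + 2 * ENNReal.ofReal |r' - r| := by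
        rw [Real.volume_Ico, Real.volume_Ioc, two_mul]
        gcongr
        · exact (le_abs_self _).trans_eq' (by ring)
        · exact le_abs_self _

lemma Real.exists_measurableSet_subset_volume_eq {E : Set ℝ} (hE : MeasurableSet E)
    {x : ℝ≥0∞} (hx : x ≤ volume E) : ∃ S ⊆ E, MeasurableSet S ∧ volume S = x := by
  rcases hx.eq_or_lt with rfl | hlt
  · exact ⟨E, subset_rfl, hE, rfl⟩
  set ν : ℝ → ℝ≥0∞ := fun r => volume (E ∩ Icc (-r) r)
  have hν_ne_top (r : ℝ) : ν r ≠ ⊤ :=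
    measure_ne_top_of_subset inter_subset_right (by simp [Real.volume_Icc])
  have hcont : Continuous fun r => (ν r).toReal := by
    refine (LipschitzWith.of_le_add_mul 2 fun r' r => ?_).continuous
    have hfin : volume (E ∩ Icc (-r) r) ≠ ⊤ := hν_ne_top r
    have := ENNReal.toReal_mono (ENNReal.add_ne_top.2 ⟨hfin, by finiteness⟩)
      (Real.volume_inter_Icc_le E r r')
    rw [ENNReal.toReal_add hfin (by finiteness)] at this
    simpa [Real.dist_eq] using this
  obtain ⟨n, hn⟩ : ∃ n : ℕ, x < ν n := by
    have hU : ⋃ n : ℕ, E ∩ Icc (-(n : ℝ)) n = E := by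
      refine (iUnion_subset fun n => inter_subset_left).antisymm fun z hz => ?_
      obtain ⟨n, hn⟩ := exists_nat_ge |z|
      exact mem_iUnion.2 ⟨n, hz, abs_le.1 hn⟩
    have hmono : Monotone fun n : ℕ => E ∩ Icc (-(n : ℝ)) n := fun m n hmn =>
      inter_subset_inter_right E (Icc_subset_Icc (by simpa using hmn) (by simpa using hmn))
    have := tendsto_measure_iUnion_atTop (μ := volume) hmono
    rw [hU] at this
    exact (this.eventually_const_lt hlt).exists
  obtain ⟨r, -, hr⟩ := intermediate_value_Icc (Nat.cast_nonneg n) hcont.continuousOn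
    (show x.toReal ∈ Icc (ν 0).toReal (ν n).toReal from
      ⟨by simp [ν, measure_mono_null inter_subset_right (measure_singleton _)],
        ENNReal.toReal_mono (hν_ne_top n) hn.le⟩)
  exact ⟨E ∩ Icc (-r) r, inter_subset_left, hE.inter measurableSet_Icc,
    (ENNReal.toReal_eq_toReal_iff' (hν_ne_top r) (ne_top_of_lt hn)).1 hr⟩

lemma musupp_congr {ξ : L2R} {g : ℝ → ℂ} (h : ξ =ᵐ[volume] g) :
    musupp ξ = volume (support g) :=
  measure_congr <| h.mono fun x hx => by change (ξ x ≠ 0) = (g x ≠ 0); rw [hx]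

lemma musupp_zero : musupp 0 = 0 := by
  simp [musupp_congr (Lp.coeFn_zero ℂ 2 volume)]

lemma musupp_add_le (ξ η : L2R) : musupp (ξ + η) ≤ musupp ξ + musupp η := by
  rw [musupp_congr (Lp.coeFn_add ξ η)]
  exact (measure_mono (support_add _ _)).trans (measure_union_le _ _)

lemma eq_zero_of_musupp_eq_zero {ξ : L2R} (h : musupp ξ = 0) : ξ = 0 :=
  (Lp.eq_zero_iff_ae_eq_zero).2 (ae_iff.2 h)

lemma exists_add_eq_musupp_le {ξ : L2R} {x y : ℝ≥0∞} (hξ : musupp ξ ≤ x + y) :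
    ∃ ξ₁ ξ₂ : L2R, ξ = ξ₁ + ξ₂ ∧ musupp ξ₁ ≤ x ∧ musupp ξ₂ ≤ y := by
  rcases le_or_gt (musupp ξ) x with hle | hlt
  · exact ⟨ξ, 0, (add_zero ξ).symm, hle, musupp_zero.trans_le zero_le⟩
  have hm := Lp.aestronglyMeasurable ξ
  set w := hm.mk ξ
  have hw : ⇑ξ =ᵐ[volume] w := hm.ae_eq_mk
  obtain ⟨S, hSw, hS, hSx⟩ := Real.exists_measurableSet_subset_volume_eq
    hm.stronglyMeasurable_mk.measurableSet_support ((musupp_congr hw).symm ▸ hlt.le)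
  have hwL2 : MemLp w 2 volume := (Lp.memLp ξ).ae_eq hw
  have h₁ := hwL2.indicator hS
  have h₂ := hwL2.indicator hS.compl
  refine ⟨h₁.toLp _, h₂.toLp _, ?_, ?_, ?_⟩
  · refine Lp.ext ?_
    filter_upwards [hw, h₁.coeFn_toLp, h₂.coeFn_toLp, Lp.coeFn_add (h₁.toLp _) (h₂.toLp _)]
      with z hz hz₁ hz₂ hz₃
    rw [hz, hz₃, Pi.add_apply, hz₁, hz₂, indicator_self_add_compl_apply]
  · rw [musupp_congr h₁.coeFn_toLp]
    exact (measure_mono support_indicator_subset).trans hSx.le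
  · rw [musupp_congr h₂.coeFn_toLp, support_indicator, inter_comm, ← sdiff_eq,
      measure_sdiff_le_iff_le_add hS.nullMeasurableSet hSw (hSx ▸ ne_top_of_lt hlt), hSx,
      ← musupp_congr hw]
    exact hξ

lemma isClosed_setOf_musupp_le (c : ℝ≥0∞) : IsClosed {η : L2R | musupp η ≤ c} := by
  refine IsSeqClosed.isClosed fun η η₀ hη hlim => ?_
  obtain ⟨ns, -, hae⟩ := (tendstoInMeasure_of_tendsto_Lp hlim).exists_seq_tendsto_ae
  exact measure_support_le_of_tendsto_ae hae fun n => hη (ns n)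

lemma musupp_simpleFunc_lt_top (ψ : Lp.simpleFunc ℂ 2 (volume : Measure ℝ)) :
    musupp (ψ : L2R) < ⊤ := by
  rw [musupp_congr (Lp.simpleFunc.toSimpleFunc_eq_toFun ψ).symm]
  exact SimpleFunc.measure_support_lt_top_of_memLp _ (Lp.simpleFunc.memLp ψ)
    two_ne_zero ofNat_ne_top

section Phi

variable (a : L2R →L[ℂ] L2R)

lemma musupp_apply_le_Phi {ξ : L2R} {x : ℝ≥0∞} (h : musupp ξ ≤ x) : musupp (a ξ) ≤ Phi a x :=
  le_iSup (fun η : {ξ : L2R // musupp ξ ≤ x} => musupp (a η.1)) ⟨ξ, h⟩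

lemma Phi_mono : Monotone (Phi a) :=
  fun _ _ hxy => iSup_le fun ξ => musupp_apply_le_Phi a (ξ.2.trans hxy)

lemma Phi_zero : Phi a 0 = 0 := by
  refine le_antisymm (iSup_le fun ξ => ?_) zero_le
  rw [eq_zero_of_musupp_eq_zero (nonpos_iff_eq_zero.1 ξ.2), map_zero, musupp_zero]

lemma Phi_add_le (x y : ℝ≥0∞) : Phi a (x + y) ≤ Phi a x + Phi a y := by
  refine iSup_le fun ⟨ξ, hξ⟩ => ?_
  obtain ⟨ξ₁, ξ₂, rfl, h₁, h₂⟩ := exists_add_eq_musupp_le hξ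
  rw [map_add]
  exact (musupp_add_le _ _).trans
    (add_le_add (musupp_apply_le_Phi a h₁) (musupp_apply_le_Phi a h₂))

lemma Phi_top_le_iSup : Phi a ⊤ ≤ ⨆ t ∈ Iio ⊤, Phi a t := by
  refine iSup_le fun ⟨ξ, _⟩ => ?_
  refine (Lp.simpleFunc.denseRange (p := 2) ofNat_ne_top).induction_on
    (p := fun ξ => musupp (a ξ) ≤ _) ξ ((isClosed_setOf_musupp_le _).preimage a.continuous)
    fun ψ => ?_
  exact (musupp_apply_le_Phi a le_rfl).trans
    (le_iSup₂_of_le _ (musupp_simpleFunc_lt_top ψ) le_rfl)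

end Phi

lemma Monotone.update_bot {α β : Type*} [PartialOrder α] [OrderBot α] [DecidableEq α]
    [Preorder β] [OrderBot β] {f : α → β} (hf : Monotone f) : Monotone (update f ⊥ ⊥) := by
  intro x y hxy
  rcases eq_or_ne x ⊥ with rfl | hx
  · simp
  have hy : y ≠ ⊥ := fun hy => hx (le_bot_iff.1 (hy ▸ hxy))
  rw [update_of_ne hx, update_of_ne hy]
  exact hf hxy

section Concave

variable {f h : ℝ≥0∞ → ℝ≥0∞}

lemma concave_update_zero
    (hf : ∀ a b x y : ℝ≥0∞, a + b = 1 → a * f x + b * f y ≤ f (a * x + b * y))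
    (a b x y : ℝ≥0∞) (hab : a + b = 1) :
    a * update f 0 0 x + b * update f 0 0 y ≤ update f 0 0 (a * x + b * y) := by
  have hscale (c z : ℝ≥0∞) (hc : c ≤ 1) : c * update f 0 0 z ≤ update f 0 0 (c * z) := by
    rcases eq_or_ne (c * z) 0 with hcz | hcz
    · rcases mul_eq_zero.1 hcz with rfl | rfl <;> simp
    rw [update_of_ne hcz, update_of_ne (right_ne_zero_of_mul hcz)]
    exact le_add_self.trans (by simpa using hf (1 - c) c 0 z (tsub_add_cancel_of_le hc))
  rcases eq_or_ne x 0 with rfl | hx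
  · simpa using hscale b y (hab ▸ le_add_self)
  rcases eq_or_ne y 0 with rfl | hy
  · simpa using hscale a x (hab ▸ le_self_add)
  have hxy : a * x + b * y ≠ 0 := by
    rintro hxy
    obtain ⟨rfl, rfl⟩ : a = 0 ∧ b = 0 := by simpa [hx, hy] using hxy
    simp at hab
  rw [update_of_ne hx, update_of_ne hy, update_of_ne hxy]
  exact hf a b x y hab

lemma icod_update_top (hm : Monotone f)
    (hc : ∀ a b x y : ℝ≥0∞, a + b = 1 → a * f x + b * f y ≤ f (a * x + b * y))
    (h0 : f 0 = 0) : ICOD (update f ⊤ (⨆ t ∈ Iio ⊤, f t)) := by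
  set g := update f ⊤ (⨆ t ∈ Iio ⊤, f t)
  have hg (x : ℝ≥0∞) (hx : x ≠ ⊤) : g x = f x := update_of_ne hx _ _
  have hgtop : g ⊤ = ⨆ t ∈ Iio ⊤, f t := update_self ..
  have hgm : Monotone g := by
    intro x y hxy
    rcases eq_or_ne y ⊤ with rfl | hy
    · rcases eq_or_ne x ⊤ with rfl | hx
      · exact le_rfl
      · rw [hg x hx, hgtop]
        exact le_iSup₂_of_le x hx.lt_top le_rfl
    · rw [hg x (ne_top_of_le_ne_top hy hxy), hg y hy]
      exact hm hxy
  refine ⟨hgm, fun a b x y hab => ?_, (hg 0 zero_ne_top).trans h0,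
    hgtop.trans (biSup_congr fun t ht => (hg t ht.ne).symm)⟩
  rcases eq_or_ne (a * x + b * y) ⊤ with hxy | hxy
  · calc a * g x + b * g y ≤ a * g ⊤ + b * g ⊤ := by gcongr <;> exact hgm le_top
      _ = g (a * x + b * y) := by rw [← add_mul, hab, one_mul, hxy]
  have hmul (c z : ℝ≥0∞) (hcz : c * z ≠ ⊤) : c * g z = c * f z := by
    rcases eq_or_ne c 0 with rfl | hc0
    · simp
    · rw [hg z fun hz => hcz (hz ▸ mul_top hc0)]
  rw [hmul a x (ENNReal.add_ne_top.1 hxy).1, hmul b y (ENNReal.add_ne_top.1 hxy).2, hg _ hxy]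
  exact hc a b x y hab

def affineMajorant (h : ℝ≥0∞ → ℝ≥0∞) (x : ℝ≥0∞) : ℝ≥0∞ :=
  ⨅ t ∈ Ioo 0 ⊤, (x / t + 1) * h t

lemma monotone_affineMajorant : Monotone (affineMajorant h) :=
  fun _ _ hxy => iInf₂_mono fun _ _ => by gcongr

lemma affineMajorant_concave (a b x y : ℝ≥0∞) (hab : a + b = 1) :
    a * affineMajorant h x + b * affineMajorant h y ≤ affineMajorant h (a * x + b * y) := by
  refine le_iInf₂ fun t ht => ?_
  calc a * affineMajorant h x + b * affineMajorant h y
      ≤ a * ((x / t + 1) * h t) + b * ((y / t + 1) * h t) := by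
        gcongr <;> exact iInf₂_le t ht
    _ = ((a * x + b * y) / t + (a + b)) * h t := by simp only [div_eq_mul_inv]; ring
    _ = ((a * x + b * y) / t + 1) * h t := by rw [hab]

lemma le_affineMajorant (hm : Monotone h) (h0 : h 0 = 0)
    (hsub : ∀ x y, h (x + y) ≤ h x + h y) {x : ℝ≥0∞} (hx : x ≠ ⊤) : h x ≤ affineMajorant h x := by
  refine le_iInf₂ fun t ⟨ht0, htop⟩ => ?_
  have hnat (n : ℕ) : h (n * t) ≤ n * h t := by
    simpa using Finset.le_sum_of_subadditive h h0.le hsub (Finset.range n) fun _ => t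
  set r := (x / t).toNNReal
  have hr : (r : ℝ≥0∞) = x / t := coe_toNNReal (div_lt_top hx ht0.ne').ne
  have hxr : x ≤ ⌈r⌉₊ * t := by
    calc x = r * t := by rw [hr, ENNReal.div_mul_cancel ht0.ne' htop.ne]
      _ ≤ ⌈r⌉₊ * t := by gcongr; exact_mod_cast Nat.le_ceil r
  calc h x ≤ h (⌈r⌉₊ * t) := hm hxr
    _ ≤ ⌈r⌉₊ * h t := hnat _
    _ ≤ (x / t + 1) * h t := by
        gcongr
        rw [← hr]
        exact_mod_cast (Nat.ceil_lt_add_one r.2).le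

lemma affineMajorant_le_two_mul {x : ℝ≥0∞} (hx0 : x ≠ 0) (hx : x ≠ ⊤) :
    affineMajorant h x ≤ 2 * h x := by
  calc affineMajorant h x ≤ (x / x + 1) * h x := iInf₂_le x ⟨pos_iff_ne_zero.2 hx0, hx.lt_top⟩
    _ = 2 * h x := by rw [ENNReal.div_self hx0 hx, one_add_one_eq_two]

def concaveMajorant (h : ℝ≥0∞ → ℝ≥0∞) : ℝ≥0∞ → ℝ≥0∞ :=
  let f := update (affineMajorant h) 0 0
  update f ⊤ (⨆ t ∈ Iio ⊤, f t)

lemma icod_concaveMajorant : ICOD (concaveMajorant h) :=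
  icod_update_top monotone_affineMajorant.update_bot
    (concave_update_zero affineMajorant_concave) (update_self ..)

lemma le_concaveMajorant (hm : Monotone h) (h0 : h 0 = 0)
    (hsub : ∀ x y, h (x + y) ≤ h x + h y) (htop : h ⊤ ≤ ⨆ t ∈ Iio ⊤, h t) (x : ℝ≥0∞) :
    h x ≤ concaveMajorant h x := by
  have hfin (t : ℝ≥0∞) (ht : t ≠ ⊤) : h t ≤ update (affineMajorant h) 0 0 t := by
    rcases eq_or_ne t 0 with rfl | ht0
    · simp [h0]
    · rw [update_of_ne ht0]
      exact le_affineMajorant hm h0 hsub ht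
  rcases eq_or_ne x ⊤ with rfl | hx
  · rw [concaveMajorant, update_self]
    exact htop.trans (iSup₂_mono fun t ht => hfin t ht.ne)
  · rw [concaveMajorant, update_of_ne hx]
    exact hfin x hx

lemma concaveMajorant_le_two_mul (hm : Monotone h) (x : ℝ≥0∞) :
    concaveMajorant h x ≤ 2 * h x := by
  have hfin (t : ℝ≥0∞) (ht : t ≠ ⊤) : update (affineMajorant h) 0 0 t ≤ 2 * h t := by
    rcases eq_or_ne t 0 with rfl | ht0
    · simp
    · rw [update_of_ne ht0]
      exact affineMajorant_le_two_mul ht0 ht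
  rcases eq_or_ne x ⊤ with rfl | hx
  · rw [concaveMajorant, update_self]
    exact iSup₂_le fun t ht => (hfin t ht.ne).trans (by gcongr; exact hm le_top)
  · rw [concaveMajorant, update_of_ne hx]
    exact hfin x hx

end Concave

lemma biSup_Iio_top_add_of_monotone {f g : ℝ≥0∞ → ℝ≥0∞} (hf : Monotone f) (hg : Monotone g) :
    (⨆ t ∈ Iio ⊤, f t) + ⨆ t ∈ Iio ⊤, g t = ⨆ t ∈ Iio ⊤, (f t + g t) := by
  simp only [iSup_subtype']
  exact ENNReal.iSup_add_iSup_of_monotone (hf.comp (Subtype.mono_coe _))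
    (hg.comp (Subtype.mono_coe _))

namespace ICOD

variable {f g : ℝ≥0∞ → ℝ≥0∞}

lemma zero : ICOD 0 :=
  ⟨monotone_const, by simp, rfl, by simp⟩

lemma add (hf : ICOD f) (hg : ICOD g) : ICOD fun x => f x + g x := by
  obtain ⟨hfm, hfc, hf0, hft⟩ := hf
  obtain ⟨hgm, hgc, hg0, hgt⟩ := hg
  refine ⟨hfm.add hgm, fun a b x y hab => ?_, by simp [hf0, hg0], ?_⟩
  · calc a * (f x + g x) + b * (f y + g y)
        = (a * f x + b * f y) + (a * g x + b * g y) := by ring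
      _ ≤ f (a * x + b * y) + g (a * x + b * y) := add_le_add (hfc a b x y hab) (hgc a b x y hab)
  · change f ⊤ + g ⊤ = ⨆ t ∈ Iio ⊤, (f t + g t)
    rw [hft, hgt, biSup_Iio_top_add_of_monotone hfm hgm]

lemma div_mul_le (hf : ICOD f) {v s : ℝ≥0∞} (hvs : v ≤ s) (hs0 : s ≠ 0) (hs : s ≠ ⊤) :
    v / s * f s ≤ f v := by
  have h₁ : v / s ≤ 1 := ENNReal.div_le_of_le_mul (by rwa [one_mul])
  simpa [hf.2.2.1, ENNReal.div_mul_cancel hs0 hs] using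
    hf.2.1 (v / s) (1 - v / s) s 0 (add_tsub_cancel_of_le h₁)

lemma le_iSup_Iio (hf : ICOD f) (s : ℝ≥0∞) : f s ≤ ⨆ v ∈ Iio s, f v := by
  rcases eq_or_ne s 0 with rfl | hs0
  · simp [hf.2.2.1]
  rcases eq_or_ne s ⊤ with rfl | hs
  · exact hf.2.2.2.le
  calc f s = (⨆ v : Iio s, (v : ℝ≥0∞)) / s * f s := by
        rw [iSup_Iio_eq_self_iff_isSuccPrelimit.2 (Order.IsSuccPrelimit.of_dense s),
          ENNReal.div_self hs0 hs, one_mul]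
    _ = ⨆ v : Iio s, v / s * f s := by rw [ENNReal.iSup_div, ENNReal.iSup_mul]
    _ ≤ ⨆ v ∈ Iio s, f v :=
        iSup_le fun v =>
          (hf.div_mul_le v.2.le hs0 hs).trans (le_iSup₂ (f := fun v _ => f v) v.1 v.2)

lemma comp (hf : ICOD f) (hg : ICOD g) : ICOD (f ∘ g) := by
  refine ⟨hf.1.comp hg.1, fun a b x y hab => ?_, by simp [hg.2.2.1, hf.2.2.1], ?_⟩
  · exact (hf.2.1 a b _ _ hab).trans (hf.1 (hg.2.1 a b x y hab))
  refine le_antisymm ((hf.le_iSup_Iio _).trans (iSup₂_le fun v hv => ?_))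
    (iSup₂_le fun t _ => hf.1 (hg.1 le_top))
  rw [mem_Iio, hg.2.2.2, lt_biSup_iff] at hv
  obtain ⟨t, ht, hvt⟩ := hv
  exact le_iSup₂_of_le t ht (hf.1 hvt.le)

end ICOD

lemma Bset_mono {f g : ℝ≥0∞ → ℝ≥0∞} (hfg : f ≤ g) : Bset f ⊆ Bset g :=
  fun _ ha => ⟨fun x => (ha.1 x).trans (hfg x), fun x => (ha.2 x).trans (hfg x)⟩

lemma Phi_add_le_concaveMajorant (a b : L2R →L[ℂ] L2R) :
    Phi a + Phi b ≤ concaveMajorant (Phi a + Phi b) :=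
  le_concaveMajorant ((Phi_mono a).add (Phi_mono b)) (by simp [Phi_zero])
    (fun x y => (add_le_add (Phi_add_le a x y) (Phi_add_le b x y)).trans_eq
      (add_add_add_comm ..))
    ((add_le_add (Phi_top_le_iSup a) (Phi_top_le_iSup b)).trans_eq
      (biSup_Iio_top_add_of_monotone (Phi_mono a) (Phi_mono b)))

lemma mem_Bset_concaveMajorant (a : L2R →L[ℂ] L2R) :
    a ∈ Bset (concaveMajorant (Phi a + Phi (adjoint a))) :=
  ⟨fun x => le_self_add.trans (Phi_add_le_concaveMajorant a _ x),
    fun x => le_add_self.trans (Phi_add_le_concaveMajorant a _ x)⟩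

lemma concaveMajorant_Phi_le {a : L2R →L[ℂ] L2R} {f : ℝ≥0∞ → ℝ≥0∞} (ha : a ∈ Bset f)
    (x : ℝ≥0∞) : concaveMajorant (Phi a + Phi (adjoint a)) x ≤ (f x + f x) + (f x + f x) := by
  have hPhi : Phi a x + Phi (adjoint a) x ≤ f x + f x := add_le_add (ha.1 x) (ha.2 x)
  calc concaveMajorant (Phi a + Phi (adjoint a)) x ≤ 2 * (Phi a x + Phi (adjoint a) x) :=
        concaveMajorant_le_two_mul ((Phi_mono a).add (Phi_mono _)) x
    _ ≤ (f x + f x) + (f x + f x) := by rw [two_mul]; exact add_le_add hPhi hPhi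

theorem support_expansion_alg_generated_by_icod_general (F : Set (ℝ≥0∞ → ℝ≥0∞)) (hne : F.Nonempty)
    (hadd : ∀ f ∈ F, ∀ g ∈ F, (fun x => f x + g x) ∈ F)
    (hcomp : ∀ f ∈ F, ∀ g ∈ F, f ∘ g ∈ F) :
    ∃ G : Set (ℝ≥0∞ → ℝ≥0∞), G.Nonempty ∧ (∀ g ∈ G, ICOD g) ∧
      (∀ f ∈ G, ∀ g ∈ G, (fun x => f x + g x) ∈ G) ∧
      (∀ f ∈ G, ∀ g ∈ G, f ∘ g ∈ G) ∧
      closure (⋃ g ∈ G, Bset g) = closure (⋃ f ∈ F, Bset f) := by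
  obtain ⟨f₀, hf₀⟩ := hne
  refine ⟨{g | ICOD g ∧ ∃ f ∈ F, g ≤ f}, ⟨0, ICOD.zero, f₀, hf₀, fun _ => zero_le⟩,
    fun g hg => hg.1, ?_, ?_, congrArg closure (subset_antisymm ?_ ?_)⟩
  · rintro g₁ ⟨hg₁, f₁, hf₁, hle₁⟩ g₂ ⟨hg₂, f₂, hf₂, hle₂⟩
    exact ⟨hg₁.add hg₂, _, hadd f₁ hf₁ f₂ hf₂, fun x => add_le_add (hle₁ x) (hle₂ x)⟩
  · rintro g₁ ⟨hg₁, f₁, hf₁, hle₁⟩ g₂ ⟨hg₂, f₂, hf₂, hle₂⟩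
    exact ⟨hg₁.comp hg₂, _, hcomp f₁ hf₁ f₂ hf₂, fun x => (hg₁.1 (hle₂ x)).trans (hle₁ _)⟩
  · exact iUnion₂_subset fun g ⟨_, f, hf, hgf⟩ => subset_iUnion₂_of_subset f hf (Bset_mono hgf)
  · refine iUnion₂_subset fun f hf a ha => mem_iUnion₂.2 ⟨_, ⟨icod_concaveMajorant, _,
      hadd _ (hadd f hf f hf) _ (hadd f hf f hf), concaveMajorant_Phi_le ha⟩,
      mem_Bset_concaveMajorant a⟩

/-- Every support expansion C*-algebra is generated by a nonempty family of ICOD functions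
closed under addition and composition. -/
theorem support_expansion_alg_generated_by_icod (F : Set (ℝ≥0∞ → ℝ≥0∞)) (hne : F.Nonempty)
    (hmono : ∀ f ∈ F, Monotone f)
    (hadd : ∀ f ∈ F, ∀ g ∈ F, (fun x => f x + g x) ∈ F)
    (hcomp : ∀ f ∈ F, ∀ g ∈ F, f ∘ g ∈ F) :
    ∃ G : Set (ℝ≥0∞ → ℝ≥0∞), G.Nonempty ∧ (∀ g ∈ G, ICOD g) ∧
      (∀ f ∈ G, ∀ g ∈ G, (fun x => f x + g x) ∈ G) ∧
      (∀ f ∈ G, ∀ g ∈ G, f ∘ g ∈ G) ∧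
      closure (⋃ g ∈ G, Bset g) = closure (⋃ f ∈ F, Bset f) :=
  support_expansion_alg_generated_by_icod_general F hne hadd hcomp
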